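/- arXiv:1709.05641 — 5 statements merged into one kernel-verified Lean document; each statement's English description precedes it below -/
import Mathlib

section
/- If {f_k} is a (U, C)-controlled Bessel sequence in H (i.e., the sums Σ_k ⟨f, Uf_k⟩⟨Cf_k, f⟩ converge and are bounded by B‖f‖² for all f), then {f_k} is a Bessel sequence in H, i.e., there exists B' > 0 such that Σ_k |⟨f, f_k⟩|² ≤ B'‖f‖² for all f ∈ H. -/
/-!
Polarization with `x = Ui† h` and `y = Ci† h` writes `⟪F k, h⟫ * ⟪h, F k⟫ = ‖⟪F k, h⟫‖ ^ 2` as a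
linear combination of the terms of four convergent controlled series, so the coefficient
sequence of every vector is square-summable. Such a family is Bessel by uniform boundedness:
the seminorms `f ↦ (∑ k ∈ s, ‖⟪F k, f⟫‖ ^ 2) ^ (1/2)` over finite `s` are pointwise bounded, so
their supremum is a lower semicontinuous seminorm on a Baire space, hence continuous, hence
dominated by a multiple of the norm.
-/

open scoped ComplexInnerProductSpace ComplexOrder InnerProductSpace
open ContinuousLinearMap

section BesselBound

variable {𝕜 E ι : Type*} [RCLike 𝕜] [NormedAddCommGroup E] [InnerProductSpace 𝕜 E]

noncomputable def finiteAnalysisOp (F : ι → E) (s : Finset ι) : E →L[𝕜] EuclideanSpace 𝕜 s :=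
  (EuclideanSpace.equiv s 𝕜).symm.toContinuousLinearMap ∘L
    ContinuousLinearMap.pi fun k : s => innerSL 𝕜 (F k)

lemma norm_finiteAnalysisOp_sq (F : ι → E) (s : Finset ι) (f : E) :
    ‖finiteAnalysisOp (𝕜 := 𝕜) F s f‖ ^ 2 = ∑ k ∈ s, ‖⟪F k, f⟫_𝕜‖ ^ 2 := by
  rw [EuclideanSpace.norm_sq_eq, ← Finset.sum_coe_sort s]
  rfl

theorem exists_tsum_norm_inner_sq_le_of_summable [CompleteSpace E] (F : ι → E)
    (hF : ∀ f : E, Summable fun k => ‖⟪F k, f⟫_𝕜‖ ^ 2) :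
    ∃ B, 0 < B ∧ ∀ f : E, ∑' k, ‖⟪F k, f⟫_𝕜‖ ^ 2 ≤ B * ‖f‖ ^ 2 := by
  let p : Finset ι → Seminorm 𝕜 E := fun s =>
    (normSeminorm 𝕜 (EuclideanSpace 𝕜 s)).comp (finiteAnalysisOp F s).toLinearMap
  have hp : ∀ s f, p s f ^ 2 = ∑ k ∈ s, ‖⟪F k, f⟫_𝕜‖ ^ 2 := fun s f =>
    norm_finiteAnalysisOp_sq F s f
  have hp_bdd : BddAbove (Set.range p) := by
    refine Seminorm.bddAbove_range_iff.2 fun f => ⟨√(∑' k, ‖⟪F k, f⟫_𝕜‖ ^ 2), ?_⟩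
    rintro _ ⟨s, rfl⟩
    refine Real.le_sqrt_of_sq_le ?_
    rw [hp]
    exact (hF f).sum_le_tsum s fun _ _ => by positivity
  have hp_cont : ∀ s, Continuous (p s) := fun s =>
    continuous_norm.comp (finiteAnalysisOp (𝕜 := 𝕜) F s).continuous
  have hsup_cont : Continuous ⇑(⨆ s, p s : Seminorm 𝕜 E) := by
    rw [Seminorm.coe_iSup_eq hp_bdd]
    exact Seminorm.continuous_iSup p hp_cont hp_bdd
  obtain ⟨C, hC, hbound⟩ := (⨆ s, p s).bound_of_continuous_normedSpace hsup_cont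
  refine ⟨C ^ 2, by positivity, fun f => Real.tsum_le_of_sum_le (fun _ => by positivity) ?_⟩
  intro s
  have hs : p s f ≤ C * ‖f‖ :=
    (Seminorm.le_def.1 (le_ciSup hp_bdd s) f).trans (hbound f)
  rw [← hp, ← mul_pow]
  exact pow_le_pow_left₀ (apply_nonneg _ _) hs 2

end BesselBound

section Polarization

variable {H ι : Type*} [NormedAddCommGroup H] [InnerProductSpace ℂ H]

lemma inner_mul_inner_eq_polarization (a b x y : H) :
    ⟪a, x⟫ * ⟪y, b⟫ =
      ((⟪a, x + y⟫ * ⟪x + y, b⟫ - ⟪a, x - y⟫ * ⟪x - y, b⟫)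
        + Complex.I * (⟪a, x + Complex.I • y⟫ * ⟪x + Complex.I • y, b⟫
          - ⟪a, x - Complex.I • y⟫ * ⟪x - Complex.I • y, b⟫)) / 4 := by
  simp only [inner_add_right, inner_add_left, inner_sub_right, inner_sub_left,
    inner_smul_right, inner_smul_left, Complex.conj_I]
  linear_combination (⟪a, x⟫ * ⟪y, b⟫ - ⟪a, y⟫ * ⟪x, b⟫) / 2 * Complex.I_sq

lemma summable_inner_mul_inner_of_forall {a b : ι → H}
    (h : ∀ z : H, Summable fun k => ⟪a k, z⟫ * ⟪z, b k⟫) (x y : H) :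
    Summable fun k => ⟪a k, x⟫ * ⟪y, b k⟫ := by
  exact (((h _).sub (h _)).add (((h _).sub (h _)).mul_left Complex.I)).div_const 4 |>.congr
    fun k => (inner_mul_inner_eq_polarization (a k) (b k) x y).symm

end Polarization

theorem stmt_5_general {H : Type*} [NormedAddCommGroup H] [InnerProductSpace ℂ H]
    [CompleteSpace H]
    (U Ui C Ci : H →L[ℂ] H)
    (hUiU : Ui ∘L U = 1)
    (hCiC : Ci ∘L C = 1)
    (F : ℕ → H) (B : ℝ)
    (hBessel : ∀ f : H, ∃ s : ℂ,
      HasSum (fun k => ⟪U (F k), f⟫ * ⟪f, C (F k)⟫) s ∧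
      s ≤ ((B * ‖f‖ ^ 2 : ℝ) : ℂ)) :
    ∃ B' : ℝ, 0 < B' ∧ ∀ f : H,
      Summable (fun k => ‖⟪F k, f⟫‖ ^ 2) ∧
      ∑' k, ‖⟪F k, f⟫‖ ^ 2 ≤ B' * ‖f‖ ^ 2 := by
  have hsummable : ∀ h : H, Summable fun k => ‖⟪F k, h⟫‖ ^ 2 := by
    intro h
    have hpolar := summable_inner_mul_inner_of_forall
      (fun f => (hBessel f).choose_spec.1.summable) (Ui.adjoint h) (Ci.adjoint h)
    simp only [adjoint_inner_right, adjoint_inner_left, ← comp_apply, hUiU, hCiC,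
      ← inner_conj_symm h, RCLike.mul_conj] at hpolar
    exact_mod_cast hpolar
  obtain ⟨B', hB', hbound⟩ := exists_tsum_norm_inner_sq_le_of_summable F hsummable
  exact ⟨B', hB', fun f => ⟨hsummable f, hbound f⟩⟩

theorem stmt_5 {H : Type*} [NormedAddCommGroup H] [InnerProductSpace ℂ H]
    [CompleteSpace H]
    (U Ui C Ci : H →L[ℂ] H)
    (hUUi : U ∘L Ui = 1) (hUiU : Ui ∘L U = 1)
    (hCCi : C ∘L Ci = 1) (hCiC : Ci ∘L C = 1)
    (F : ℕ → H) (B : ℝ) (hB : 0 < B)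
    (hBessel : ∀ f : H, ∃ s : ℂ,
      HasSum (fun k => ⟪U (F k), f⟫ * ⟪f, C (F k)⟫) s ∧
      s ≤ ((B * ‖f‖ ^ 2 : ℝ) : ℂ)) :
    ∃ B' : ℝ, 0 < B' ∧ ∀ f : H,
      Summable (fun k => ‖⟪F k, f⟫‖ ^ 2) ∧
      ∑' k, ‖⟪F k, f⟫‖ ^ 2 ≤ B' * ‖f‖ ^ 2 :=
  stmt_5_general U Ui C Ci hUiU hCiC F B hBessel
end

section
/- If {f_k} is a frame for H with frame operator S_F and CS_F U* is a positive operator, then {f_k} is a (U, C)-controlled frame for H. -/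
/-!
The controlled sum `∑ ⟪U f_k, f⟫ ⟪f, C f_k⟫` is `⟪f, T f⟫` for `T = C S_F U*`. The lower frame
bound makes `S_F` invertible, so `T` is positive and invertible, i.e. strictly positive in the
C⋆-algebra `H →L[ℂ] H`. Its spectrum is then a compact subset of `(0, ‖T‖]`, which gives
`r • 1 ≤ T ≤ ‖T‖ • 1` in the Loewner order for some `r > 0`.
-/

open scoped ComplexInnerProductSpace ComplexOrder
open ContinuousLinearMap

lemma IsStrictlyPositive.exists_pos_algebraMap_le {A : Type*} [CStarAlgebra A] [PartialOrder A]
    [StarOrderedRing A] {a : A} (ha : IsStrictlyPositive a) :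
    ∃ r > 0, algebraMap ℝ A r ≤ a := by
  cases subsingleton_or_nontrivial A
  · exact ⟨1, one_pos, (Subsingleton.elim _ _).le⟩
  · exact (CFC.exists_pos_algebraMap_le_iff ha.isSelfAdjoint).2 fun _ hx ↦ ha.spectrum_pos hx

namespace ContinuousLinearMap

variable {H : Type*} [NormedAddCommGroup H] [InnerProductSpace ℂ H]

lemma inner_map_self_le_of_le {S T : H →L[ℂ] H} (h : S ≤ T) (x : H) :
    ⟪x, S x⟫ ≤ ⟪x, T x⟫ := by
  simpa [inner_sub_right] using h.inner_nonneg_right x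

lemma inner_algebraMap_apply (c : ℝ) (x : H) :
    ⟪x, algebraMap ℝ (H →L[ℂ] H) c x⟫ = ((c * ‖x‖ ^ 2 : ℝ) : ℂ) := by
  simp [Algebra.algebraMap_eq_smul_one, inner_self_eq_norm_sq_to_K]

end ContinuousLinearMap

section FrameOperator

variable {ι H : Type*} [NormedAddCommGroup H] [InnerProductSpace ℂ H]

def IsFrameOperator (F : ι → H) (S : H →L[ℂ] H) : Prop :=
  ∀ f, HasSum (fun k => ⟪F k, f⟫ • F k) (S f)

namespace IsFrameOperator

variable {F : ι → H} {S : H →L[ℂ] H}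

lemma hasSum_norm_inner_sq (hS : IsFrameOperator F S) (f : H) :
    HasSum (fun k => ‖⟪F k, f⟫‖ ^ 2) (⟪f, S f⟫).re := by
  have h := Complex.hasSum_re ((hS f).mapL (innerSL ℂ f))
  simp only [innerSL_apply_apply, inner_smul_right, ← inner_conj_symm f (F _),
    Complex.mul_conj', ← Complex.ofReal_pow, Complex.ofReal_re] at h
  exact h

variable [CompleteSpace H]

lemma hasSum_inner_mul_inner (hS : IsFrameOperator F S) (U C : H →L[ℂ] H) (f : H) :
    HasSum (fun k => ⟪U (F k), f⟫ * ⟪f, C (F k)⟫) ⟪f, (C ∘L S ∘L adjoint U) f⟫ := by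
  simpa [inner_smul_right, adjoint_inner_right, mul_comm]
    using (hS (adjoint U f)).mapL ((innerSL ℂ f).comp C)

lemma isUnit (hS : IsFrameOperator F S) {A : ℝ} (hA : 0 < A)
    (hlower : ∀ f, A * ‖f‖ ^ 2 ≤ ∑' k, ‖⟪F k, f⟫‖ ^ 2) : IsUnit S :=
  isUnit_of_forall_le_norm_inner_map S (c := ⟨A, hA.le⟩) hA fun f => calc
    ‖f‖ ^ 2 * A ≤ ∑' k, ‖⟪F k, f⟫‖ ^ 2 := by linarith [hlower f]
    _ = (⟪f, S f⟫).re := (hS.hasSum_norm_inner_sq f).tsum_eq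
    _ ≤ ‖⟪f, S f⟫‖ := Complex.re_le_norm _
    _ = ‖⟪S f, f⟫‖ := norm_inner_symm _ _

end IsFrameOperator

end FrameOperator

theorem stmt_8_general {H : Type*} [NormedAddCommGroup H] [InnerProductSpace ℂ H]
    [CompleteSpace H]
    (U Ui C Ci : H →L[ℂ] H)
    (hUUi : U ∘L Ui = 1) (hUiU : Ui ∘L U = 1)
    (hCCi : C ∘L Ci = 1) (hCiC : Ci ∘L C = 1)
    (F : ℕ → H) (A B : ℝ) (hA : 0 < A)
    (hframe : ∀ f : H,
      Summable (fun k => ‖⟪F k, f⟫‖ ^ 2) ∧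
      A * ‖f‖ ^ 2 ≤ ∑' k, ‖⟪F k, f⟫‖ ^ 2 ∧
      ∑' k, ‖⟪F k, f⟫‖ ^ 2 ≤ B * ‖f‖ ^ 2)
    (S : H →L[ℂ] H)
    (hS : ∀ f : H, HasSum (fun k => ⟪F k, f⟫ • F k) (S f))
    (hpos : (C ∘L S ∘L (ContinuousLinearMap.adjoint U)).IsPositive) :
    ∃ A' B' : ℝ, 0 < A' ∧ A' ≤ B' ∧ ∀ f : H, ∃ s : ℂ,
      HasSum (fun k => ⟪U (F k), f⟫ * ⟪f, C (F k)⟫) s ∧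
      ((A' * ‖f‖ ^ 2 : ℝ) : ℂ) ≤ s ∧ s ≤ ((B' * ‖f‖ ^ 2 : ℝ) : ℂ) := by
  set T := C ∘L S ∘L adjoint U
  have hF : IsFrameOperator F S := hS
  have hU : IsUnit U := ⟨⟨U, Ui, hUUi, hUiU⟩, rfl⟩
  have hC : IsUnit C := ⟨⟨C, Ci, hCCi, hCiC⟩, rfl⟩
  have hT : IsStrictlyPositive T :=
    (hC.mul ((hF.isUnit hA fun f => (hframe f).2.1).mul hU.star)).isStrictlyPositive
      ((nonneg_iff_isPositive T).2 hpos)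
  obtain ⟨r, hr, hrT⟩ := hT.exists_pos_algebraMap_le
  refine ⟨r, max r ‖T‖, hr, le_max_left _ _, fun f =>
    ⟨_, hF.hasSum_inner_mul_inner U C f, ?_, ?_⟩⟩
  · rw [← inner_algebraMap_apply]
    exact inner_map_self_le_of_le hrT f
  · calc ⟪f, T f⟫ ≤ ((‖T‖ * ‖f‖ ^ 2 : ℝ) : ℂ) := by
          rw [← inner_algebraMap_apply]
          exact inner_map_self_le_of_le hpos.isSelfAdjoint.le_algebraMap_norm_self f
      _ ≤ ((max r ‖T‖ * ‖f‖ ^ 2 : ℝ) : ℂ) := by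
          rw [Complex.real_le_real]
          gcongr
          exact le_max_right _ _

theorem stmt_8 {H : Type*} [NormedAddCommGroup H] [InnerProductSpace ℂ H]
    [CompleteSpace H]
    (U Ui C Ci : H →L[ℂ] H)
    (hUUi : U ∘L Ui = 1) (hUiU : Ui ∘L U = 1)
    (hCCi : C ∘L Ci = 1) (hCiC : Ci ∘L C = 1)
    (F : ℕ → H) (A B : ℝ) (hA : 0 < A) (hAB : A ≤ B)
    (hframe : ∀ f : H,
      Summable (fun k => ‖⟪F k, f⟫‖ ^ 2) ∧
      A * ‖f‖ ^ 2 ≤ ∑' k, ‖⟪F k, f⟫‖ ^ 2 ∧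
      ∑' k, ‖⟪F k, f⟫‖ ^ 2 ≤ B * ‖f‖ ^ 2)
    (S : H →L[ℂ] H)
    (hS : ∀ f : H, HasSum (fun k => ⟪F k, f⟫ • F k) (S f))
    (hpos : (C ∘L S ∘L (ContinuousLinearMap.adjoint U)).IsPositive) :
    ∃ A' B' : ℝ, 0 < A' ∧ A' ≤ B' ∧ ∀ f : H, ∃ s : ℂ,
      HasSum (fun k => ⟪U (F k), f⟫ * ⟪f, C (F k)⟫) s ∧
      ((A' * ‖f‖ ^ 2 : ℝ) : ℂ) ≤ s ∧ s ≤ ((B' * ‖f‖ ^ 2 : ℝ) : ℂ) :=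
  stmt_8_general U Ui C Ci hUUi hUiU hCCi hCiC F A B hA hframe S hS hpos
end

section
/- Let {f_k} be a frame for a Hilbert space H with lower frame bound A > 0 and U, C ∈ GL(H). If the controlled Gram operator G_{CU} with entries ⟨Cf_j, Uf_k⟩ is Hilbert–Schmidt, then Σ_k ‖f_k‖² < ∞ (and hence H is finite dimensional if {f_k} is a frame with infinitely many nonzero elements). In particular A‖(C*U)⁻¹‖⁻² Σ_k ‖f_k‖² ≤ ‖G_{CU}‖₂². -/
open scoped ComplexInnerProductSpace
open ContinuousLinearMap

theorem stmt_10 {H : Type*} [NormedAddCommGroup H] [InnerProductSpace ℂ H]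
    [CompleteSpace H]
    (U Ui C Ci : H →L[ℂ] H)
    (hUUi : U ∘L Ui = 1) (hUiU : Ui ∘L U = 1)
    (hCCi : C ∘L Ci = 1) (hCiC : Ci ∘L C = 1)
    (F : ℕ → H) (A : ℝ) (hA : 0 < A)
    (hlower : ∀ f : H, Summable (fun k => ‖⟪F k, f⟫‖ ^ 2) ∧
      A * ‖f‖ ^ 2 ≤ ∑' k, ‖⟪F k, f⟫‖ ^ 2)
    (W : H →L[ℂ] H)
    (hW1 : (ContinuousLinearMap.adjoint C ∘L U) ∘L W = 1)
    (hW2 : W ∘L (ContinuousLinearMap.adjoint C ∘L U) = 1)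
    (hHS : Summable (fun p : ℕ × ℕ => ‖⟪U (F p.2), C (F p.1)⟫‖ ^ 2)) :
    Summable (fun k => ‖F k‖ ^ 2) ∧
      A * (‖W‖ ^ 2)⁻¹ * ∑' k, ‖F k‖ ^ 2 ≤
        ∑' p : ℕ × ℕ, ‖⟪U (F p.2), C (F p.1)⟫‖ ^ 2 := by
  set T : H →L[ℂ] H := ContinuousLinearMap.adjoint C ∘L U with hT
  -- entries rewrite
  have hinner : ∀ j k : ℕ, ‖⟪U (F k), C (F j)⟫‖ = ‖⟪F j, T (F k)⟫‖ := by
    intro j k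
    rw [norm_inner_symm]
    congr 1
    simp only [hT, ContinuousLinearMap.comp_apply]
    rw [ContinuousLinearMap.adjoint_inner_right]
  have hWT : ∀ x : H, W (T x) = x := by
    intro x
    have := ContinuousLinearMap.ext_iff.mp hW2 x
    simpa using this
  have hFle : ∀ k, ‖F k‖ ≤ ‖W‖ * ‖T (F k)‖ := by
    intro k
    conv_lhs => rw [← hWT (F k)]
    exact W.le_opNorm _
  have hkey : ∀ k, (‖W‖ ^ 2)⁻¹ * ‖F k‖ ^ 2 ≤ ‖T (F k)‖ ^ 2 := by
    intro k
    rcases eq_or_lt_of_le (norm_nonneg W) with hW0 | hWpos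
    · have : ‖F k‖ ≤ 0 := by simpa [← hW0] using hFle k
      have hFk : ‖F k‖ = 0 := le_antisymm this (norm_nonneg _)
      simp [hFk, sq_nonneg]
    · rw [inv_mul_le_iff₀ (by positivity)]
      calc ‖F k‖ ^ 2 ≤ (‖W‖ * ‖T (F k)‖) ^ 2 := by
            apply pow_le_pow_left₀ (norm_nonneg _) (hFle k)
        _ = ‖W‖ ^ 2 * ‖T (F k)‖ ^ 2 := by ring
  -- lower frame bound applied to T (F k)
  have hglow : ∀ k, A * ‖T (F k)‖ ^ 2 ≤ ∑' j, ‖⟪F j, T (F k)⟫‖ ^ 2 :=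
    fun k => (hlower (T (F k))).2
  have hgsummable : ∀ k, Summable (fun j => ‖⟪F j, T (F k)⟫‖ ^ 2) :=
    fun k => (hlower (T (F k))).1
  -- marginal summability
  have hHS' : Summable (fun p : ℕ × ℕ => ‖⟪U (F p.1), C (F p.2)⟫‖ ^ 2) := by
    have := hHS.prod_symm
    simpa [Prod.swap] using this
  have hfib : ∀ k : ℕ, Summable (fun j => ‖⟪U (F k), C (F j)⟫‖ ^ 2) :=
    fun k => hHS'.prod_factor k
  have hmarg : Summable (fun k => ∑' j, ‖⟪U (F k), C (F j)⟫‖ ^ 2) :=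
    (hHS'.hasSum.prod_fiberwise (fun k => (hfib k).hasSum)).summable
  have htsum_eq : ∑' p : ℕ × ℕ, ‖⟪U (F p.2), C (F p.1)⟫‖ ^ 2
      = ∑' k, ∑' j, ‖⟪U (F k), C (F j)⟫‖ ^ 2 := by
    rw [← Summable.tsum_prod' hHS' hfib]
    exact ((Equiv.prodComm ℕ ℕ).tsum_eq _).symm
  have hg_eq : ∀ k, (∑' j, ‖⟪U (F k), C (F j)⟫‖ ^ 2)
      = ∑' j, ‖⟪F j, T (F k)⟫‖ ^ 2 := by
    intro k; exact tsum_congr fun j => by rw [hinner j k]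
  -- summability of ‖F k‖ ^ 2
  have hterm : ∀ k, ‖F k‖ ^ 2 ≤ (‖W‖ ^ 2 * A⁻¹) * ∑' j, ‖⟪U (F k), C (F j)⟫‖ ^ 2 := by
    intro k
    have h1 : ‖F k‖ ^ 2 ≤ ‖W‖ ^ 2 * ‖T (F k)‖ ^ 2 := by
      calc ‖F k‖ ^ 2 ≤ (‖W‖ * ‖T (F k)‖) ^ 2 :=
            pow_le_pow_left₀ (norm_nonneg _) (hFle k) 2
        _ = ‖W‖ ^ 2 * ‖T (F k)‖ ^ 2 := by ring
    have h2 : ‖T (F k)‖ ^ 2 ≤ A⁻¹ * ∑' j, ‖⟪F j, T (F k)⟫‖ ^ 2 := by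
      rw [le_inv_mul_iff₀ hA]
      exact hglow k
    calc ‖F k‖ ^ 2 ≤ ‖W‖ ^ 2 * ‖T (F k)‖ ^ 2 := h1
      _ ≤ ‖W‖ ^ 2 * (A⁻¹ * ∑' j, ‖⟪F j, T (F k)⟫‖ ^ 2) := by
          apply mul_le_mul_of_nonneg_left h2 (by positivity)
      _ = (‖W‖ ^ 2 * A⁻¹) * ∑' j, ‖⟪U (F k), C (F j)⟫‖ ^ 2 := by
          rw [hg_eq k]; ring
  have hsumF : Summable (fun k => ‖F k‖ ^ 2) := by
    apply Summable.of_nonneg_of_le (fun k => by positivity) hterm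
    exact hmarg.mul_left _
  refine ⟨hsumF, ?_⟩
  rw [htsum_eq]
  calc A * (‖W‖ ^ 2)⁻¹ * ∑' k, ‖F k‖ ^ 2
      = ∑' k, A * ((‖W‖ ^ 2)⁻¹ * ‖F k‖ ^ 2) := by
        rw [← tsum_mul_left]
        exact tsum_congr fun k => by ring
    _ ≤ ∑' k, ∑' j, ‖⟪U (F k), C (F j)⟫‖ ^ 2 := by
        apply Summable.tsum_le_tsum _ ((hsumF.mul_left _).mul_left _) hmarg
        intro k
        rw [hg_eq k]
        calc A * ((‖W‖ ^ 2)⁻¹ * ‖F k‖ ^ 2) ≤ A * ‖T (F k)‖ ^ 2 :=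
              mul_le_mul_of_nonneg_left (hkey k) hA.le
          _ ≤ _ := hglow k
end

section
/- Let {f_k} = {U⁻¹CMe_k} be a (U, C)-controlled Riesz basis for H. Then {f_k} is a Bessel sequence, and the sequence g_k = U*(C⁻¹)*(M⁻¹)*e_k satisfies f = Σ_k ⟨f, g_k⟩ f_k = Σ_k ⟨f, f_k⟩ g_k for all f ∈ H; moreover {g_k} is the unique sequence with this property, and it is a ((U*)⁻¹, (C*)⁻¹)-controlled Riesz basis. -/
/-!
Writing `T = U⁻¹CM`, the sequence `f_k = T e_k` is the image of an orthonormal basis under a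
bounded invertible operator, and `g_k = (T⁻¹)* e_k`. Then `⟪f_k, f⟫ = ⟪e_k, T* f⟫` gives the Bessel
bound `‖T‖² ‖f‖²`, and `⟪g_k, f⟫ = ⟪e_k, T⁻¹ f⟫`, so expanding `T⁻¹ f` in the basis `e` and
applying `T` reconstructs `f`; the second reconstruction is the first one for the pair
`(T⁻¹)*, T*`. Applying `T⁻¹` to any reconstruction formula gives an expansion of `T⁻¹ f` in `e`,
whose coefficients are unique, which forces `g'_k = g_k`.
-/

open scoped ComplexInnerProductSpace InnerProductSpace
open ContinuousLinearMap

section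

variable {ι 𝕜 E : Type*} [RCLike 𝕜] [NormedAddCommGroup E] [InnerProductSpace 𝕜 E]

theorem Orthonormal.inner_eq_of_hasSum {e : ι → E} (he : Orthonormal 𝕜 e) {c : ι → 𝕜} {x : E}
    (h : HasSum (fun j => c j • e j) x) (k : ι) : ⟪e k, x⟫_𝕜 = c k := by
  classical
  have hk : HasSum (fun j => c j * ⟪e k, e j⟫_𝕜) ⟪e k, x⟫_𝕜 := by
    simpa only [innerSL_apply_apply, inner_smul_right, mul_comm] using h.mapL (innerSL 𝕜 (e k))
  refine hk.unique ?_
  convert hasSum_ite_eq k (c k) using 2 with j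
  rw [orthonormal_iff_ite.mp he k j]
  rcases eq_or_ne j k with rfl | hjk
  · simp
  · simp [hjk, hjk.symm]

variable (e : HilbertBasis ι 𝕜 E)

theorem HilbertBasis.hasSum_inner_smul (x : E) : HasSum (fun k => ⟪e k, x⟫_𝕜 • e k) x := by
  simpa only [e.repr_apply_apply] using e.hasSum_repr x

variable {F : Type*} [NormedAddCommGroup F] [InnerProductSpace 𝕜 F] [CompleteSpace E]
  [CompleteSpace F]

theorem HilbertBasis.bessel_of_map (T : E →L[𝕜] F) (f : F) :
    Summable (fun k => ‖⟪T (e k), f⟫_𝕜‖ ^ 2) ∧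
      ∑' k, ‖⟪T (e k), f⟫_𝕜‖ ^ 2 ≤ ‖T‖ ^ 2 * ‖f‖ ^ 2 := by
  simp only [← adjoint_inner_right]
  refine ⟨e.orthonormal.inner_products_summable _, ?_⟩
  calc ∑' k, ‖⟪e k, adjoint T f⟫_𝕜‖ ^ 2
      ≤ ‖adjoint T f‖ ^ 2 := e.orthonormal.tsum_inner_products_le _
    _ ≤ (‖adjoint T‖ * ‖f‖) ^ 2 := by gcongr; exact le_opNorm _ _
    _ = ‖T‖ ^ 2 * ‖f‖ ^ 2 := by rw [LinearIsometryEquiv.norm_map, mul_pow]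

theorem HilbertBasis.hasSum_inner_adjoint_smul {A : E →L[𝕜] F} {B : F →L[𝕜] E}
    (hAB : A ∘L B = 1) (f : F) :
    HasSum (fun k => ⟪adjoint B (e k), f⟫_𝕜 • A (e k)) f := by
  simpa only [adjoint_inner_left, map_smul, ← comp_apply, hAB, one_apply_eq_self]
    using (e.hasSum_inner_smul (B f)).mapL A

theorem HilbertBasis.eq_adjoint_of_hasSum_inner_smul {A : E →L[𝕜] F} {B : F →L[𝕜] E}
    (hBA : B ∘L A = 1) {g : ι → F} (hg : ∀ f, HasSum (fun k => ⟪g k, f⟫_𝕜 • A (e k)) f) (k : ι) :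
    g k = adjoint B (e k) := by
  refine ext_inner_right 𝕜 fun f => ?_
  have hB : HasSum (fun j => ⟪g j, f⟫_𝕜 • e j) (B f) := by
    simpa only [map_smul, ← comp_apply, hBA, one_apply_eq_self] using (hg f).mapL B
  rw [adjoint_inner_left, e.orthonormal.inner_eq_of_hasSum hB]

end

theorem ContinuousLinearMap.adjoint_comp_eq_one {𝕜 E F : Type*} [RCLike 𝕜]
    [NormedAddCommGroup E] [InnerProductSpace 𝕜 E] [CompleteSpace E] [NormedAddCommGroup F]
    [InnerProductSpace 𝕜 F] [CompleteSpace F] {A : E →L[𝕜] F} {B : F →L[𝕜] E} (h : A ∘L B = 1) :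
    adjoint B ∘L adjoint A = 1 := by
  rw [← adjoint_comp, h, adjoint_one]

theorem ContinuousLinearMap.bijective_of_comp_eq_one {R M : Type*} [Semiring R]
    [TopologicalSpace M] [AddCommMonoid M] [Module R M] {A B : M →L[R] M}
    (hAB : A ∘L B = 1) (hBA : B ∘L A = 1) : Function.Bijective A :=
  Function.bijective_iff_has_inverse.mpr
    ⟨B, fun x => by simpa using congr($hBA x), fun x => by simpa using congr($hAB x)⟩

theorem stmt_15_general {H : Type*} [NormedAddCommGroup H] [InnerProductSpace ℂ H]
    [CompleteSpace H]
    (U Ui C Ci Mi : H →L[ℂ] H)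
    (hUUi : U ∘L Ui = 1) (hUiU : Ui ∘L U = 1)
    (hCCi : C ∘L Ci = 1) (hCiC : Ci ∘L C = 1)
    (e : HilbertBasis ℕ ℂ H) (M : H →L[ℂ] H)
    (hMMi : M ∘L Mi = 1) (hMiM : Mi ∘L M = 1)
    (F : ℕ → H) (hF : ∀ k, F k = Ui (C (M (e k))))
    (g : ℕ → H)
    (hg : ∀ k, g k = ContinuousLinearMap.adjoint U
      (ContinuousLinearMap.adjoint Ci (ContinuousLinearMap.adjoint Mi (e k)))) :
    (∃ B : ℝ, 0 < B ∧ ∀ f : H,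
      Summable (fun k => ‖⟪F k, f⟫‖ ^ 2) ∧
      ∑' k, ‖⟪F k, f⟫‖ ^ 2 ≤ B * ‖f‖ ^ 2) ∧
    (∀ f : H, HasSum (fun k => ⟪g k, f⟫ • F k) f ∧
      HasSum (fun k => ⟪F k, f⟫ • g k) f) ∧
    (∀ g' : ℕ → H, (∀ f : H, HasSum (fun k => ⟪g' k, f⟫ • F k) f ∧
      HasSum (fun k => ⟪F k, f⟫ • g' k) f) → g' = g) ∧
    (∃ N : H →L[ℂ] H, Function.Bijective N ∧ ∀ k,
      g k = ContinuousLinearMap.adjoint U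
        (ContinuousLinearMap.adjoint Ci (N (e k)))) := by
  set T := Ui ∘L C ∘L M
  set Ti := Mi ∘L Ci ∘L U
  have hTTi : T ∘L Ti = 1 := by
    simp only [T, Ti, ← mul_def, mul_assoc]
    rw [← mul_assoc M, mul_def M, hMMi, one_mul, ← mul_assoc C, mul_def C, hCCi, one_mul,
      mul_def, hUiU]
  have hTiT : Ti ∘L T = 1 := by
    simp only [T, Ti, ← mul_def, mul_assoc]
    rw [← mul_assoc U, mul_def U, hUUi, one_mul, ← mul_assoc Ci, mul_def Ci, hCiC, one_mul,
      mul_def, hMiM]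
  obtain rfl : F = fun k => T (e k) := funext hF
  obtain rfl : g = fun k => adjoint Ti (e k) := funext fun k => by simp [hg, Ti, adjoint_comp]
  refine ⟨⟨‖T‖ ^ 2 + 1, by positivity, fun f => ?_⟩, fun f => ⟨?_, ?_⟩, ?_, ?_⟩
  · refine (e.bessel_of_map T f).imp_right fun h => h.trans ?_
    gcongr
    exact le_add_of_nonneg_right zero_le_one
  · exact e.hasSum_inner_adjoint_smul hTTi f
  · simpa only [adjoint_adjoint] using e.hasSum_inner_adjoint_smul (adjoint_comp_eq_one hTTi) f
  · exact fun g' hg' => funext <| e.eq_adjoint_of_hasSum_inner_smul hTiT fun f => (hg' f).1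
  · exact ⟨adjoint Mi, bijective_of_comp_eq_one (adjoint_comp_eq_one hMMi)
      (adjoint_comp_eq_one hMiM), hg⟩

theorem stmt_15 {H : Type*} [NormedAddCommGroup H] [InnerProductSpace ℂ H]
    [CompleteSpace H]
    (U Ui C Ci Mi : H →L[ℂ] H)
    (hUUi : U ∘L Ui = 1) (hUiU : Ui ∘L U = 1)
    (hCCi : C ∘L Ci = 1) (hCiC : Ci ∘L C = 1)
    (e : HilbertBasis ℕ ℂ H) (M : H →L[ℂ] H) (hM : Function.Bijective M)
    (hMMi : M ∘L Mi = 1) (hMiM : Mi ∘L M = 1)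
    (F : ℕ → H) (hF : ∀ k, F k = Ui (C (M (e k))))
    (g : ℕ → H)
    (hg : ∀ k, g k = ContinuousLinearMap.adjoint U
      (ContinuousLinearMap.adjoint Ci (ContinuousLinearMap.adjoint Mi (e k)))) :
    (∃ B : ℝ, 0 < B ∧ ∀ f : H,
      Summable (fun k => ‖⟪F k, f⟫‖ ^ 2) ∧
      ∑' k, ‖⟪F k, f⟫‖ ^ 2 ≤ B * ‖f‖ ^ 2) ∧
    (∀ f : H, HasSum (fun k => ⟪g k, f⟫ • F k) f ∧
      HasSum (fun k => ⟪F k, f⟫ • g k) f) ∧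
    (∀ g' : ℕ → H, (∀ f : H, HasSum (fun k => ⟪g' k, f⟫ • F k) f ∧
      HasSum (fun k => ⟪F k, f⟫ • g' k) f) → g' = g) ∧
    (∃ N : H →L[ℂ] H, Function.Bijective N ∧ ∀ k,
      g k = ContinuousLinearMap.adjoint U
        (ContinuousLinearMap.adjoint Ci (N (e k)))) :=
  stmt_15_general U Ui C Ci Mi hUUi hUiU hCCi hCiC e M hMMi hMiM F hF g hg
end

section
/- Let {f_k} = {U⁻¹CMe_k} be a (U, C)-controlled Riesz basis and define g_k = U⁻¹(C⁻¹)*U*(C⁻¹)*(M⁻¹)*e_k. Then f = Σ_k ⟨f, Ug_k⟩ Cf_k = Σ_k ⟨f, Cf_k⟩ Ug_k for all f ∈ H, and the biorthogonality relation ⟨Cf_k, Ug_j⟩ = δ_{kj} holds. -/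
open scoped ComplexInnerProductSpace
open ContinuousLinearMap

theorem stmt_16 {H : Type*} [NormedAddCommGroup H] [InnerProductSpace ℂ H]
    [CompleteSpace H]
    (U Ui C Ci Mi : H →L[ℂ] H)
    (hUUi : U ∘L Ui = 1) (hUiU : Ui ∘L U = 1)
    (hCCi : C ∘L Ci = 1) (hCiC : Ci ∘L C = 1)
    (e : HilbertBasis ℕ ℂ H) (M : H →L[ℂ] H) (hM : Function.Bijective M)
    (hMMi : M ∘L Mi = 1) (hMiM : Mi ∘L M = 1)
    (F : ℕ → H) (hF : ∀ k, F k = Ui (C (M (e k))))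
    (g : ℕ → H)
    (hg : ∀ k, g k = Ui (ContinuousLinearMap.adjoint Ci
      (ContinuousLinearMap.adjoint U
        (ContinuousLinearMap.adjoint Ci (ContinuousLinearMap.adjoint Mi (e k)))))) :
    (∀ f : H, HasSum (fun k => ⟪U (g k), f⟫ • C (F k)) f ∧
      HasSum (fun k => ⟪C (F k), f⟫ • U (g k)) f) ∧
    ∀ k j, ⟪U (g j), C (F k)⟫ = if k = j then 1 else 0 := by
  have hUUi' : ∀ x, U (Ui x) = x := fun x => congrFun (congrArg DFunLike.coe hUUi) x
  have hCCi' : ∀ x, C (Ci x) = x := fun x => congrFun (congrArg DFunLike.coe hCCi) x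
  have hCiC' : ∀ x, Ci (C x) = x := fun x => congrFun (congrArg DFunLike.coe hCiC) x
  have hMMi' : ∀ x, M (Mi x) = x := fun x => congrFun (congrArg DFunLike.coe hMMi) x
  have hMiM' : ∀ x, Mi (M x) = x := fun x => congrFun (congrArg DFunLike.coe hMiM) x
  have hUiU' : ∀ x, Ui (U x) = x := fun x => congrFun (congrArg DFunLike.coe hUiU) x
  set A : H →L[ℂ] H := Mi ∘L Ci ∘L U ∘L Ci with hA
  set T : H →L[ℂ] H := C ∘L Ui ∘L C ∘L M with hT
  have hUg : ∀ k, U (g k) = ContinuousLinearMap.adjoint A (e k) := by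
    intro k
    simp [hg, hA, adjoint_comp, hUUi']
  have hCF : ∀ k, C (F k) = T (e k) := by
    intro k; simp [hF, hT]
  have hAT : ∀ x, A (T x) = x := by
    intro x; simp [hA, hT, hCiC', hUUi', hMiM']
  have hTA : ∀ x, T (A x) = x := by
    intro x; simp [hA, hT, hMMi', hCCi', hUiU']
  have hATc : A ∘L T = 1 := by ext x; exact hAT x
  have hTAc : T ∘L A = 1 := by ext x; exact hTA x
  refine ⟨fun f => ⟨?_, ?_⟩, ?_⟩
  · have h1 : HasSum (fun k => ⟪e k, A f⟫ • (e k : H)) (A f) := by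
      simpa [e.repr_apply_apply] using e.hasSum_repr (A f)
    have h2 := h1.mapL T
    simpa [hUg, hCF, map_smul, adjoint_inner_left, hTA f] using h2
  · have h1 : HasSum (fun k => ⟪e k, ContinuousLinearMap.adjoint T f⟫ • (e k : H))
        (ContinuousLinearMap.adjoint T f) := by
      simpa [e.repr_apply_apply] using e.hasSum_repr (ContinuousLinearMap.adjoint T f)
    have h2 := h1.mapL (ContinuousLinearMap.adjoint A)
    have h3 : ContinuousLinearMap.adjoint A (ContinuousLinearMap.adjoint T f) = f := by
      have : ContinuousLinearMap.adjoint A ∘L ContinuousLinearMap.adjoint T =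
          ContinuousLinearMap.adjoint (T ∘L A) := (adjoint_comp T A).symm
      rw [hTAc] at this
      simpa [ContinuousLinearMap.one_def, ContinuousLinearMap.adjoint_id] using congrFun (congrArg DFunLike.coe this) f
    simpa [hUg, hCF, map_smul, adjoint_inner_right, h3] using h2
  · intro k j
    rw [hUg, hCF, adjoint_inner_left, hAT]
    rw [orthonormal_iff_ite.mp e.orthonormal]
    simp [eq_comm]
end
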